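/- Let τ : B^(l) → B^(l) be the map interchanging the entries x_n and x̄_n and fixing all other entries. Then τ is a well-defined involution of B^(l) satisfying: ε_{n−1} ∘ τ = ε_n, φ_{n−1} ∘ τ = φ_n, ε_n ∘ τ = ε_{n−1}, φ_n ∘ τ = φ_{n−1}, and ε_i ∘ τ = ε_i, φ_i ∘ τ = φ_i for 0 ≤ i ≤ n−2; moreover τ(f̃_{n−1} b) = f̃_n(τ b), τ(ẽ_{n−1} b) = ẽ_n(τ b), and τ(f̃_i b) = f̃_i(τ b), τ(ẽ_i b) = ẽ_i(τ b) for all 0 ≤ i ≤ n−2 and all b ∈ B^(l) (with the convention τ(0) = 0). -/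

import Mathlib

/-- An element candidate of the level-`l` perfect crystal of type `D_n^(1)`:
a pair of integer sequences `(x, x̄)`, whose relevant entries are indexed by `1, …, n`. -/
abbrev DElt : Type := (ℕ → ℤ) × (ℕ → ℤ)

/-- All entries (indices `1, …, n`) are nonnegative; for the result of a Kashiwara
operator this expresses that the result "is not `0`". -/
def dvalid (n : ℕ) (p : DElt) : Prop :=
  ∀ i, 1 ≤ i → i ≤ n → 0 ≤ p.1 i ∧ 0 ≤ p.2 i

/-- Membership in the level-`l` perfect crystal `B^(l)` of type `D_n^(1)`:
all entries are nonnegative integers (we normalize the irrelevant indices to `0`),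
`x_n = 0` or `x̄_n = 0`, and `Σ_{i=1}^n (x_i + x̄_i) = l`. -/
def dmem (n l : ℕ) (p : DElt) : Prop :=
  dvalid n p ∧
  (∀ i, i = 0 ∨ n < i → p.1 i = 0 ∧ p.2 i = 0) ∧
  (p.1 n = 0 ∨ p.2 n = 0) ∧
  (∑ i ∈ Finset.Icc 1 n, (p.1 i + p.2 i)) = (l : ℤ)

/-- `(x)_+ = max(0, x)`. -/
def pPart (x : ℤ) : ℤ := max 0 x

/-- `φ_i(b)` for `b = (x | x̄)`:  `φ_0 = x̄_1 + (x̄_2 - x_2)_+`;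
`φ_i = x_i + (x̄_{i+1} - x_{i+1})_+` for `1 ≤ i ≤ n-2`;
`φ_{n-1} = x_{n-1} + x̄_n`;  `φ_n = x_{n-1} + x_n`. -/
def dphi (n i : ℕ) (p : DElt) : ℤ :=
  if i = 0 then p.2 1 + pPart (p.2 2 - p.1 2)
  else if i ≤ n - 2 then p.1 i + pPart (p.2 (i+1) - p.1 (i+1))
  else if i = n - 1 then p.1 (n-1) + p.2 n
  else p.1 (n-1) + p.1 n

/-- `ε_i(b)` for `b = (x | x̄)`:  `ε_0 = x_1 + (x_2 - x̄_2)_+`;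
`ε_i = x̄_i + (x_{i+1} - x̄_{i+1})_+` for `1 ≤ i ≤ n-2`;
`ε_{n-1} = x̄_{n-1} + x_n`;  `ε_n = x̄_{n-1} + x̄_n`. -/
def deps (n i : ℕ) (p : DElt) : ℤ :=
  if i = 0 then p.1 1 + pPart (p.1 2 - p.2 2)
  else if i ≤ n - 2 then p.2 i + pPart (p.1 (i+1) - p.2 (i+1))
  else if i = n - 1 then p.2 (n-1) + p.1 n
  else p.2 (n-1) + p.2 n

/-- The Kashiwara operator `f̃_i` of Theorem 2.2, as a total map on pairs of sequences;
"being `0`" is recorded by failure of `dvalid` for the result. -/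
def ftilde (n i : ℕ) (p : DElt) : DElt :=
  if i = 0 then
    -- case `x_2 ≥ x̄_2` / case `x_2 < x̄_2`
    if p.2 2 ≤ p.1 2 then
      (Function.update p.1 2 (p.1 2 + 1), Function.update p.2 1 (p.2 1 - 1))
    else
      (Function.update p.1 1 (p.1 1 + 1), Function.update p.2 2 (p.2 2 - 1))
  else if i ≤ n - 2 then
    -- case `x_{i+1} ≥ x̄_{i+1}` / case `x_{i+1} < x̄_{i+1}`
    if p.2 (i+1) ≤ p.1 (i+1) then
      (Function.update (Function.update p.1 i (p.1 i - 1)) (i+1) (p.1 (i+1) + 1), p.2)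
    else
      (p.1, Function.update (Function.update p.2 (i+1) (p.2 (i+1) - 1)) i (p.2 i + 1))
  else if i = n - 1 then
    -- case `x̄_n = 0` / case `x_n = 0, x̄_n ≥ 1`
    if p.2 n = 0 then
      (Function.update (Function.update p.1 (n-1) (p.1 (n-1) - 1)) n (p.1 n + 1), p.2)
    else
      (p.1, Function.update (Function.update p.2 n (p.2 n - 1)) (n-1) (p.2 (n-1) + 1))
  else
    -- `i = n`: case `x_n ≥ 1, x̄_n = 0` / case `x_n = 0`
    if 1 ≤ p.1 n ∧ p.2 n = 0 then
      (Function.update p.1 n (p.1 n - 1), Function.update p.2 (n-1) (p.2 (n-1) + 1))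
    else
      (Function.update p.1 (n-1) (p.1 (n-1) - 1), Function.update p.2 n (p.2 n + 1))

/-- The Kashiwara operator `ẽ_i` of Theorem 2.2, as a total map on pairs of sequences;
"being `0`" is recorded by failure of `dvalid` for the result. -/
def etilde (n i : ℕ) (p : DElt) : DElt :=
  if i = 0 then
    -- case `x_2 > x̄_2` / case `x_2 ≤ x̄_2`
    if p.2 2 < p.1 2 then
      (Function.update p.1 2 (p.1 2 - 1), Function.update p.2 1 (p.2 1 + 1))
    else
      (Function.update p.1 1 (p.1 1 - 1), Function.update p.2 2 (p.2 2 + 1))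
  else if i ≤ n - 2 then
    -- case `x_{i+1} > x̄_{i+1}` / case `x_{i+1} ≤ x̄_{i+1}`
    if p.2 (i+1) < p.1 (i+1) then
      (Function.update (Function.update p.1 i (p.1 i + 1)) (i+1) (p.1 (i+1) - 1), p.2)
    else
      (p.1, Function.update (Function.update p.2 (i+1) (p.2 (i+1) + 1)) i (p.2 i - 1))
  else if i = n - 1 then
    -- case `x_n ≥ 1, x̄_n = 0` / case `x_n = 0`
    if 1 ≤ p.1 n ∧ p.2 n = 0 then
      (Function.update (Function.update p.1 (n-1) (p.1 (n-1) + 1)) n (p.1 n - 1), p.2)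
    else
      (p.1, Function.update (Function.update p.2 n (p.2 n + 1)) (n-1) (p.2 (n-1) - 1))
  else
    -- `i = n`: case `x̄_n = 0` / case `x_n = 0, x̄_n ≥ 1`
    if p.2 n = 0 then
      (Function.update p.1 n (p.1 n + 1), Function.update p.2 (n-1) (p.2 (n-1) - 1))
    else
      (Function.update p.1 (n-1) (p.1 (n-1) + 1), Function.update p.2 n (p.2 n - 1))

/-- The map `τ` interchanging the entries `x_n` and `x̄_n`. -/
def tauMap (n : ℕ) (p : DElt) : DElt :=
  (Function.update p.1 n (p.2 n), Function.update p.2 n (p.1 n))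

/-!
The swap `τ` only touches the entries with index `n`. The operators `ẽ_i`, `f̃_i` and the
functions `ε_i`, `φ_i` for `i ≤ n - 2` read and write only entries with index `< n`, so they
commute with `τ`. For the indices `n - 1` and `n` the swap exchanges the defining formulas; for
the Kashiwara operators this relies on `x_n, x̄_n ≥ 0` with one of them zero, which makes the case
distinction of `f̃_{n-1}` (resp. `ẽ_{n-1}`) match that of `f̃_n` (resp. `ẽ_n`) after the swap.
-/

section

open Function

variable {n l : ℕ}

@[simp] lemma tauMap_fst_self (p : DElt) : (tauMap n p).1 n = p.2 n := update_self ..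

@[simp] lemma tauMap_snd_self (p : DElt) : (tauMap n p).2 n = p.1 n := update_self ..

lemma tauMap_fst_of_ne {j : ℕ} (hj : j ≠ n) (p : DElt) : (tauMap n p).1 j = p.1 j :=
  update_of_ne hj ..

lemma tauMap_snd_of_ne {j : ℕ} (hj : j ≠ n) (p : DElt) : (tauMap n p).2 j = p.2 j :=
  update_of_ne hj ..

lemma tauMap_involutive : Involutive (tauMap n) := by
  intro p
  ext j <;> by_cases hj : j = n <;> simp [tauMap, hj]

lemma tauMap_fst_add_snd (p : DElt) (j : ℕ) :
    (tauMap n p).1 j + (tauMap n p).2 j = p.1 j + p.2 j := by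
  by_cases hj : j = n
  · subst hj; simp [add_comm]
  · rw [tauMap_fst_of_ne hj, tauMap_snd_of_ne hj]

lemma tauMap_update_fst {j : ℕ} (hj : j ≠ n) (a b : ℕ → ℤ) (v : ℤ) :
    tauMap n (update a j v, b) = (update (tauMap n (a, b)).1 j v, (tauMap n (a, b)).2) := by
  simp only [tauMap, update_of_ne hj.symm, update_comm hj]

lemma tauMap_update_snd {j : ℕ} (hj : j ≠ n) (a b : ℕ → ℤ) (v : ℤ) :
    tauMap n (a, update b j v) = ((tauMap n (a, b)).1, update (tauMap n (a, b)).2 j v) := by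
  simp only [tauMap, update_of_ne hj.symm, update_comm hj]

lemma dvalid_tauMap {p : DElt} (hp : dvalid n p) : dvalid n (tauMap n p) := by
  intro j hj₁ hj₂
  by_cases hj : j = n
  · subst hj; simpa [and_comm] using hp j hj₁ hj₂
  · simpa [tauMap_fst_of_ne hj, tauMap_snd_of_ne hj] using hp j hj₁ hj₂

lemma dmem_tauMap {p : DElt} (hp : dmem n l p) : dmem n l (tauMap n p) := by
  obtain ⟨hvalid, hzero, hxn, hsum⟩ := hp
  refine ⟨dvalid_tauMap hvalid, fun j hj => ?_, by simpa using hxn.symm, ?_⟩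
  · by_cases hjn : j = n
    · subst hjn; simpa [and_comm] using hzero j hj
    · simpa [tauMap_fst_of_ne hjn, tauMap_snd_of_ne hjn] using hzero j hj
  · simp only [tauMap_fst_add_snd, hsum]

lemma min_fst_snd_eq_zero (hn : 1 ≤ n) {p : DElt} (hp : dmem n l p) :
    min (p.1 n) (p.2 n) = 0 := by
  obtain ⟨hvalid, -, hxn, -⟩ := hp
  have := hvalid n hn le_rfl
  omega

lemma deps_pred (hn : 2 ≤ n) (p : DElt) : deps n (n - 1) p = p.2 (n - 1) + p.1 n := by
  simp only [deps, if_neg (show n - 1 ≠ 0 by omega), if_neg (show ¬n - 1 ≤ n - 2 by omega),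
    if_true]

lemma deps_self (hn : 1 ≤ n) (p : DElt) : deps n n p = p.2 (n - 1) + p.2 n := by
  simp only [deps, if_neg (show n ≠ 0 by omega), if_neg (show ¬n ≤ n - 2 by omega),
    if_neg (show n ≠ n - 1 by omega)]

lemma dphi_pred (hn : 2 ≤ n) (p : DElt) : dphi n (n - 1) p = p.1 (n - 1) + p.2 n := by
  simp only [dphi, if_neg (show n - 1 ≠ 0 by omega), if_neg (show ¬n - 1 ≤ n - 2 by omega),
    if_true]

lemma dphi_self (hn : 1 ≤ n) (p : DElt) : dphi n n p = p.1 (n - 1) + p.1 n := by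
  simp only [dphi, if_neg (show n ≠ 0 by omega), if_neg (show ¬n ≤ n - 2 by omega),
    if_neg (show n ≠ n - 1 by omega)]

lemma deps_tauMap_pred (hn : 2 ≤ n) (p : DElt) : deps n (n - 1) (tauMap n p) = deps n n p := by
  rw [deps_pred hn, deps_self (by omega), tauMap_snd_of_ne (by omega), tauMap_fst_self]

lemma deps_tauMap_self (hn : 2 ≤ n) (p : DElt) : deps n n (tauMap n p) = deps n (n - 1) p := by
  rw [deps_pred hn, deps_self (by omega), tauMap_snd_of_ne (by omega), tauMap_snd_self]

lemma dphi_tauMap_pred (hn : 2 ≤ n) (p : DElt) : dphi n (n - 1) (tauMap n p) = dphi n n p := by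
  rw [dphi_pred hn, dphi_self (by omega), tauMap_fst_of_ne (by omega), tauMap_snd_self]

lemma dphi_tauMap_self (hn : 2 ≤ n) (p : DElt) : dphi n n (tauMap n p) = dphi n (n - 1) p := by
  rw [dphi_pred hn, dphi_self (by omega), tauMap_fst_of_ne (by omega), tauMap_fst_self]

lemma deps_tauMap_of_le (hn : 3 ≤ n) {i : ℕ} (hi : i ≤ n - 2) (p : DElt) :
    deps n i (tauMap n p) = deps n i p := by
  have : 1 ≠ n ∧ 2 ≠ n ∧ i ≠ n ∧ i + 1 ≠ n := by omega
  simp only [deps, tauMap_fst_of_ne, tauMap_snd_of_ne, this, hi, ne_eq, not_false_eq_true,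
    if_true]

lemma dphi_tauMap_of_le (hn : 3 ≤ n) {i : ℕ} (hi : i ≤ n - 2) (p : DElt) :
    dphi n i (tauMap n p) = dphi n i p := by
  have : 1 ≠ n ∧ 2 ≠ n ∧ i ≠ n ∧ i + 1 ≠ n := by omega
  simp only [dphi, tauMap_fst_of_ne, tauMap_snd_of_ne, this, hi, ne_eq, not_false_eq_true,
    if_true]

lemma tauMap_ftilde_of_le (hn : 3 ≤ n) {i : ℕ} (hi : i ≤ n - 2) (p : DElt) :
    tauMap n (ftilde n i p) = ftilde n i (tauMap n p) := by
  have : 1 ≠ n ∧ 2 ≠ n ∧ i ≠ n ∧ i + 1 ≠ n := by omega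
  simp only [ftilde, apply_ite (tauMap n), tauMap_update_fst, tauMap_update_snd,
    tauMap_fst_of_ne, tauMap_snd_of_ne, this, hi, ne_eq, not_false_eq_true, if_true]

lemma tauMap_etilde_of_le (hn : 3 ≤ n) {i : ℕ} (hi : i ≤ n - 2) (p : DElt) :
    tauMap n (etilde n i p) = etilde n i (tauMap n p) := by
  have : 1 ≠ n ∧ 2 ≠ n ∧ i ≠ n ∧ i + 1 ≠ n := by omega
  simp only [etilde, apply_ite (tauMap n), tauMap_update_fst, tauMap_update_snd,
    tauMap_fst_of_ne, tauMap_snd_of_ne, this, hi, ne_eq, not_false_eq_true, if_true]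

lemma ftilde_pred (hn : 2 ≤ n) (p : DElt) :
    ftilde n (n - 1) p = if p.2 n = 0 then
      (update (update p.1 (n - 1) (p.1 (n - 1) - 1)) n (p.1 n + 1), p.2)
    else (p.1, update (update p.2 n (p.2 n - 1)) (n - 1) (p.2 (n - 1) + 1)) := by
  simp only [ftilde, if_neg (show n - 1 ≠ 0 by omega), if_neg (show ¬n - 1 ≤ n - 2 by omega),
    if_true]

lemma ftilde_self (hn : 1 ≤ n) (p : DElt) :
    ftilde n n p = if 1 ≤ p.1 n ∧ p.2 n = 0 then
      (update p.1 n (p.1 n - 1), update p.2 (n - 1) (p.2 (n - 1) + 1))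
    else (update p.1 (n - 1) (p.1 (n - 1) - 1), update p.2 n (p.2 n + 1)) := by
  simp only [ftilde, if_neg (show n ≠ 0 by omega), if_neg (show ¬n ≤ n - 2 by omega),
    if_neg (show n ≠ n - 1 by omega)]

lemma etilde_pred (hn : 2 ≤ n) (p : DElt) :
    etilde n (n - 1) p = if 1 ≤ p.1 n ∧ p.2 n = 0 then
      (update (update p.1 (n - 1) (p.1 (n - 1) + 1)) n (p.1 n - 1), p.2)
    else (p.1, update (update p.2 n (p.2 n + 1)) (n - 1) (p.2 (n - 1) - 1)) := by
  simp only [etilde, if_neg (show n - 1 ≠ 0 by omega), if_neg (show ¬n - 1 ≤ n - 2 by omega),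
    if_true]

lemma etilde_self (hn : 1 ≤ n) (p : DElt) :
    etilde n n p = if p.2 n = 0 then
      (update p.1 n (p.1 n + 1), update p.2 (n - 1) (p.2 (n - 1) - 1))
    else (update p.1 (n - 1) (p.1 (n - 1) + 1), update p.2 n (p.2 n - 1)) := by
  simp only [etilde, if_neg (show n ≠ 0 by omega), if_neg (show ¬n ≤ n - 2 by omega),
    if_neg (show n ≠ n - 1 by omega)]

lemma tauMap_ftilde_pred (hn : 2 ≤ n) {p : DElt} (hp : min (p.1 n) (p.2 n) = 0) :
    tauMap n (ftilde n (n - 1) p) = ftilde n n (tauMap n p) := by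
  have hn1 : n - 1 ≠ n := by omega
  rw [ftilde_pred hn, ftilde_self (by omega)]
  simp only [tauMap_fst_self, tauMap_snd_self, tauMap_fst_of_ne hn1, tauMap_snd_of_ne hn1]
  split_ifs <;> ext j <;> simp only [tauMap, update_apply] <;> split_ifs <;> omega

lemma tauMap_etilde_pred (hn : 2 ≤ n) {p : DElt} (hp : min (p.1 n) (p.2 n) = 0) :
    tauMap n (etilde n (n - 1) p) = etilde n n (tauMap n p) := by
  have hn1 : n - 1 ≠ n := by omega
  rw [etilde_pred hn, etilde_self (by omega)]
  simp only [tauMap_fst_self, tauMap_snd_self, tauMap_fst_of_ne hn1, tauMap_snd_of_ne hn1]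
  split_ifs <;> ext j <;> simp only [tauMap, update_apply] <;> split_ifs <;> omega

end

theorem stmt18_general (n l : ℕ) (hn : 4 ≤ n) :
    (∀ p, dmem n l p → dmem n l (tauMap n p)) ∧
    (∀ p, dmem n l p → tauMap n (tauMap n p) = p) ∧
    (∀ p, dmem n l p →
      deps n (n-1) (tauMap n p) = deps n n p ∧ dphi n (n-1) (tauMap n p) = dphi n n p ∧
      deps n n (tauMap n p) = deps n (n-1) p ∧ dphi n n (tauMap n p) = dphi n (n-1) p ∧
      (∀ i, i ≤ n - 2 →
        deps n i (tauMap n p) = deps n i p ∧ dphi n i (tauMap n p) = dphi n i p)) ∧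
    (∀ p, dmem n l p →
      tauMap n (ftilde n (n-1) p) = ftilde n n (tauMap n p) ∧
      tauMap n (etilde n (n-1) p) = etilde n n (tauMap n p) ∧
      (∀ i, i ≤ n - 2 →
        tauMap n (ftilde n i p) = ftilde n i (tauMap n p) ∧
        tauMap n (etilde n i p) = etilde n i (tauMap n p))) := by
  have hn2 : 2 ≤ n := by omega
  have hn3 : 3 ≤ n := by omega
  refine ⟨fun _ => dmem_tauMap, fun p _ => tauMap_involutive p, fun p _ => ?_, fun p hp => ?_⟩
  · exact ⟨deps_tauMap_pred hn2 p, dphi_tauMap_pred hn2 p, deps_tauMap_self hn2 p,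
      dphi_tauMap_self hn2 p,
      fun i hi => ⟨deps_tauMap_of_le hn3 hi p, dphi_tauMap_of_le hn3 hi p⟩⟩
  · have hmin := min_fst_snd_eq_zero (by omega) hp
    exact ⟨tauMap_ftilde_pred hn2 hmin, tauMap_etilde_pred hn2 hmin,
      fun i hi => ⟨tauMap_ftilde_of_le hn3 hi p, tauMap_etilde_of_le hn3 hi p⟩⟩

/-- `τ` is a well-defined involution of `B^(l)` with
`ε_{n-1} ∘ τ = ε_n`, `φ_{n-1} ∘ τ = φ_n`, `ε_n ∘ τ = ε_{n-1}`, `φ_n ∘ τ = φ_{n-1}`, and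
`ε_i ∘ τ = ε_i`, `φ_i ∘ τ = φ_i` for `0 ≤ i ≤ n-2`; moreover `τ(f̃_{n-1} b) = f̃_n(τ b)`,
`τ(ẽ_{n-1} b) = ẽ_n(τ b)`, and `τ(f̃_i b) = f̃_i(τ b)`, `τ(ẽ_i b) = ẽ_i(τ b)` for
`0 ≤ i ≤ n-2` and all `b ∈ B^(l)` (the convention `τ(0) = 0` is automatic in the total
encoding of the Kashiwara operators). -/
theorem stmt18 (n l : ℕ) (hn : 4 ≤ n) (hl : 1 ≤ l) :
    (∀ p, dmem n l p → dmem n l (tauMap n p)) ∧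
    (∀ p, dmem n l p → tauMap n (tauMap n p) = p) ∧
    (∀ p, dmem n l p →
      deps n (n-1) (tauMap n p) = deps n n p ∧ dphi n (n-1) (tauMap n p) = dphi n n p ∧
      deps n n (tauMap n p) = deps n (n-1) p ∧ dphi n n (tauMap n p) = dphi n (n-1) p ∧
      (∀ i, i ≤ n - 2 →
        deps n i (tauMap n p) = deps n i p ∧ dphi n i (tauMap n p) = dphi n i p)) ∧
    (∀ p, dmem n l p →
      tauMap n (ftilde n (n-1) p) = ftilde n n (tauMap n p) ∧
      tauMap n (etilde n (n-1) p) = etilde n n (tauMap n p) ∧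
      (∀ i, i ≤ n - 2 →
        tauMap n (ftilde n i p) = ftilde n i (tauMap n p) ∧
        tauMap n (etilde n i p) = etilde n i (tauMap n p))) :=
  stmt18_general n l hn
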